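/- arXiv:1612.02760 — 2 statements merged into one kernel-verified Lean document; each statement's English description precedes it below -/
import Mathlib

section
/- Let Λ be a topological space with a basepoint λ₀, Z a topological space, W ⊆ Z an open set with compact closure W̄, Y a Hausdorff topological space, and g : Λ × W̄ → Y a continuous map; write g_λ := g(λ, ·) and assume that for each λ the restriction of g_λ to W is an open map. Let A₀ ⊆ Y be a nonempty connected open set with compact closure Ā₀ such that Ā₀ ⊆ g_{λ₀}(W) and g_{λ₀}(∂W) ∩ Ā₀ = ∅. Then there exists a neighbourhood N of λ₀ in Λ such that A₀ ⊆ g_λ(W) for every λ ∈ N. -/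
open Set Filter Topology

/-- If `g : Λ × W̄ → Y` is continuous, each `g_λ` is open on `W`, and `A₀`
is a nonempty connected open set with compact closure `Ā₀ ⊆ g_{λ₀}(W)` such that
`g_{λ₀}(∂W) ∩ Ā₀ = ∅`, then `A₀ ⊆ g_λ(W)` for all `λ` in a neighbourhood of `λ₀`. -/
theorem image_contains_A0_for_nearby_parameters
    {Λ : Type*} [TopologicalSpace Λ] (lam0 : Λ)
    {Z : Type*} [TopologicalSpace Z]
    {Y : Type*} [TopologicalSpace Y] [T2Space Y]
    (W : Set Z) (hWopen : IsOpen W) (hWcomp : IsCompact (closure W))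
    (g : Λ → Z → Y)
    (hgcont : ContinuousOn (fun p : Λ × Z => g p.1 p.2) (Set.univ ×ˢ closure W))
    (hgopen : ∀ l : Λ, ∀ O : Set Z, IsOpen O → O ⊆ W → IsOpen (g l '' O))
    (A0 : Set Y) (hA0ne : A0.Nonempty) (hA0conn : IsConnected A0) (hA0open : IsOpen A0)
    (hA0comp : IsCompact (closure A0))
    (hA0sub : closure A0 ⊆ g lam0 '' W)
    (hbd : g lam0 '' (closure W \ W) ∩ closure A0 = ∅) :
    ∃ N ∈ 𝓝 lam0, ∀ l ∈ N, A0 ⊆ g l '' W := by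
  obtain ⟨a0, ha0⟩ := hA0ne
  obtain ⟨z0, hz0W, hz0⟩ := hA0sub (subset_closure ha0)
  -- continuity on the subtype Λ × ↥(closure W)
  have hcont : Continuous (fun p : Λ × (closure W : Set Z) => g p.1 p.2.1) := by
    apply hgcont.comp_continuous
      (continuous_fst.prodMk (continuous_subtype_val.comp continuous_snd))
    intro x; exact ⟨mem_univ _, x.2.2⟩
  haveI : CompactSpace (closure W : Set Z) := isCompact_iff_compactSpace.mp hWcomp
  have hK : IsCompact {z : (closure W : Set Z) | (z : Z) ∉ W} :=
    (hWopen.isClosed_compl.preimage continuous_subtype_val).isCompact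
  have hOpenSet : IsOpen {p : Λ × (closure W : Set Z) | g p.1 p.2.1 ∉ closure A0} :=
    isClosed_closure.isOpen_compl.preimage hcont
  have h1 : ∀ᶠ l in 𝓝 lam0, ∀ z ∈ {z : (closure W : Set Z) | (z : Z) ∉ W},
      g l z.1 ∉ closure A0 := by
    apply hK.eventually_forall_of_forall_eventually
    intro z hz
    have hzmem : g lam0 z.1 ∉ closure A0 := by
      intro hmem
      have : g lam0 z.1 ∈ g lam0 '' (closure W \ W) ∩ closure A0 :=
        ⟨⟨z.1, ⟨z.2, hz⟩, rfl⟩, hmem⟩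
      rw [hbd] at this
      exact this
    exact hOpenSet.eventually_mem hzmem
  have h2 : ∀ᶠ l in 𝓝 lam0, g l z0 ∈ A0 := by
    have hc : Continuous fun l => g l ((⟨z0, subset_closure hz0W⟩ : (closure W : Set Z)) : Z) :=
      hcont.comp (continuous_id.prodMk continuous_const)
    have := (hA0open.preimage hc).eventually_mem (by show g lam0 z0 ∈ A0; rw [hz0]; exact ha0)
    simpa using this
  obtain ⟨N, hN, hNall⟩ := (h1.and h2).exists_mem
  refine ⟨N, hN, fun l hl => ?_⟩
  obtain ⟨hl1, hl2⟩ := hNall l hl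
  have hcl : ContinuousOn (g l) (closure W) :=
    hgcont.comp ((continuous_const.prodMk continuous_id).continuousOn)
      (fun z hz => ⟨mem_univ _, hz⟩)
  have hUopen : IsOpen (g l '' W) := hgopen l W hWopen subset_rfl
  have hVopen : IsOpen (g l '' closure W)ᶜ :=
    ((hWcomp.image_of_continuousOn hcl).isClosed).isOpen_compl
  have hdisj : Disjoint (g l '' W) (g l '' closure W)ᶜ :=
    disjoint_compl_right.mono_left (image_mono subset_closure)
  have hsub : A0 ⊆ g l '' W ∪ (g l '' closure W)ᶜ := by
    intro a ha
    by_cases hmem : a ∈ g l '' closure W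
    · obtain ⟨z, hzcl, rfl⟩ := hmem
      by_cases hzW : z ∈ W
      · exact Or.inl ⟨z, hzW, rfl⟩
      · exact absurd (subset_closure ha) (hl1 ⟨z, hzcl⟩ hzW)
    · exact Or.inr hmem
  have hne : (A0 ∩ g l '' W).Nonempty := ⟨g l z0, hl2, ⟨z0, hz0W, rfl⟩⟩
  exact hA0conn.isPreconnected.subset_left_of_subset_union hUopen hVopen hdisj hsub hne
end

section
/- Let X be a complete metric space, A ⊆ X a nonempty closed bounded set, 0 ≤ c < 1, and g₁, …, g_N : A → A maps each of which is Lipschitz with constant c; let ω : Σ = {1,…,N}^{ℕ*} → A be the associated coding map and E₀ := ω(Σ). Then E₀ is compact, and: (i) for every periodic sequence ī ∈ Σ of period k, the point ω(ī) is the unique fixed point of the contraction g_{i₁} ∘ ⋯ ∘ g_{i_k} on A; (ii) the set of points ω(ī) with ī periodic is dense in E₀; (iii) if moreover F : X → X satisfies F(g_j(a)) = a for every a ∈ A and every j, then for every periodic ī of period k one has F^k(ω(ī)) = ω(ī), so the periodic points of F are dense in E₀. -/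
open Metric Filter Function Topology
open scoped NNReal

/-- Iterated composition `g_{i 0} ∘ g_{i 1} ∘ ⋯ ∘ g_{i (k-1)}`. -/
def icomp {X : Type*} {N : ℕ} (g : Fin N → X → X) (i : ℕ → Fin N) : ℕ → X → X
  | 0 => id
  | k + 1 => fun z => icomp g i k (g (i k) z)

section aux
set_option linter.unusedSectionVars false
variable {X : Type*} [MetricSpace X] {N : ℕ} (g : Fin N → X → X)

lemma icomp_add (i : ℕ → Fin N) (m k : ℕ) (z : X) :
    icomp g i (m + k) z = icomp g i m (icomp g (fun n => i (n + m)) k z) := by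
  induction k generalizing z with
  | zero => rfl
  | succ k ih =>
    show icomp g i (m + k) (g (i (m + k)) z) = icomp g i m (icomp g _ k (g (i (k + m)) z))
    rw [ih, Nat.add_comm m k]

lemma icomp_shift (i : ℕ → Fin N) (k : ℕ) (z : X) :
    icomp g i (k + 1) z = g (i 0) (icomp g (fun n => i (n + 1)) k z) := by
  induction k generalizing z with
  | zero => rfl
  | succ k ih =>
    show icomp g i (k + 1) (g (i (k + 1)) z) = g (i 0) (icomp g _ k (g (i (k + 1)) z))
    rw [ih]

lemma icomp_congr (i j : ℕ → Fin N) (n : ℕ) (h : ∀ m < n, i m = j m) (z : X) :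
    icomp g i n z = icomp g j n z := by
  induction n generalizing z with
  | zero => rfl
  | succ n ih =>
    show icomp g i n (g (i n) z) = icomp g j n (g (j n) z)
    rw [h n (Nat.lt_succ_self n), ih (fun m hm => h m (hm.trans (Nat.lt_succ_self n)))]

lemma icomp_iterate (i : ℕ → Fin N) (k : ℕ) (hi : Function.Periodic i k) (n : ℕ) (z : X) :
    icomp g i (k * n) z = (icomp g i k)^[n] z := by
  induction n generalizing z with
  | zero => rw [Nat.mul_zero]; rfl
  | succ n ih =>
    have hp : (fun m => i (m + k)) = i := funext hi
    rw [Nat.mul_succ, Nat.add_comm (k*n) k, icomp_add, hp, ih]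
    exact (Function.iterate_succ_apply' (icomp g i k) n z).symm


lemma icomp_mapsTo {A : Set X} (hmap : ∀ j, Set.MapsTo (g j) A A) (i : ℕ → Fin N) (k : ℕ) :
    Set.MapsTo (icomp g i k) A A := by
  induction k with
  | zero => exact Set.mapsTo_id A
  | succ k ih => exact fun z hz => ih ((hmap (i k)) hz)

lemma icomp_lip {A : Set X} {c : ℝ≥0} (hmap : ∀ j, Set.MapsTo (g j) A A)
    (hlip : ∀ j, LipschitzOnWith c (g j) A) (i : ℕ → Fin N) (k : ℕ) :
    LipschitzOnWith (c ^ k) (icomp g i k) A := by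
  induction k with
  | zero => simpa [icomp] using (LipschitzWith.id).lipschitzOnWith (s := A)
  | succ k ih =>
    have h := ih.comp (hlip (i k)) (hmap (i k))
    rw [pow_succ]
    exact h

end aux

/-- for the coding map `ω` of an iterated function system of strict
contractions of a nonempty closed bounded subset `A` of a complete metric space, the set
`E₀ := ω(Σ)` is compact; (i) for every periodic `ī` of period `k`, `ω(ī)` is the unique
fixed point in `A` of the contraction `g_{i₁} ∘ ⋯ ∘ g_{i_k}`; (ii) the points `ω(ī)` with
`ī` periodic are dense in `E₀`; (iii) if `F ∘ g_j = id` on `A` for all `j`, then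
`F^[k](ω(ī)) = ω(ī)` for `ī` periodic of period `k`, so the periodic points of `F` are
dense in `E₀`. -/
theorem coding_map_periodic_points_dense
    {X : Type*} [MetricSpace X] [CompleteSpace X]
    (A : Set X) (hAne : A.Nonempty) (hAcl : IsClosed A) (hAbd : Bornology.IsBounded A)
    {N : ℕ} (g : Fin N → X → X) (c : ℝ≥0) (hc : c < 1)
    (hmap : ∀ j, Set.MapsTo (g j) A A)
    (hlip : ∀ j, LipschitzOnWith c (g j) A)
    (ω : (ℕ → Fin N) → X)
    (hω : ∀ i : ℕ → Fin N, ∀ z ∈ A, Tendsto (fun k => icomp g i k z) atTop (𝓝 (ω i))) :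
    IsCompact (Set.range ω) ∧
    (∀ (i : ℕ → Fin N) (k : ℕ), 1 ≤ k → Function.Periodic i k →
      ω i ∈ A ∧ icomp g i k (ω i) = ω i ∧ ∀ x ∈ A, icomp g i k x = x → x = ω i) ∧
    Set.range ω ⊆ closure (ω '' {i : ℕ → Fin N | ∃ k, 1 ≤ k ∧ Function.Periodic i k}) ∧
    (∀ F : X → X, (∀ j, ∀ a ∈ A, F (g j a) = a) →
      (∀ (i : ℕ → Fin N) (k : ℕ), 1 ≤ k → Function.Periodic i k → F^[k] (ω i) = ω i) ∧
      Set.range ω ⊆ closure {x | x ∈ Set.range ω ∧ ∃ k, 1 ≤ k ∧ F^[k] x = x}) := by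
  obtain ⟨z, hz⟩ := hAne
  obtain ⟨C, hC⟩ := Metric.isBounded_iff.1 hAbd
  have hc1 : (c:ℝ) < 1 := by exact_mod_cast hc
  have hc0 : (0:ℝ) ≤ c := c.coe_nonneg
  have hωA : ∀ i, ω i ∈ A := fun i =>
    hAcl.mem_of_tendsto (hω i z hz)
      (Filter.Eventually.of_forall fun k => icomp_mapsTo g hmap i k hz)
  have hkey : ∀ (i : ℕ → Fin N) (n : ℕ) (y : X), y ∈ A →
      dist (ω i) (icomp g i n y) ≤ (c:ℝ)^n * C := by
    intro i n y hy
    have h1 : Tendsto (fun p => icomp g i (n + p) y) atTop (𝓝 (ω i)) := by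
      have := (hω i y hy).comp (tendsto_add_atTop_nat n)
      simpa [Function.comp_def, Nat.add_comm] using this
    have h2 := h1.dist (tendsto_const_nhds (x := icomp g i n y))
    refine le_of_tendsto h2 (Filter.Eventually.of_forall fun p => ?_)
    rw [icomp_add]
    calc dist (icomp g i n (icomp g (fun m => i (m + n)) p y)) (icomp g i n y)
        ≤ (c^n : ℝ≥0) * dist (icomp g (fun m => i (m + n)) p y) y :=
          (icomp_lip g hmap hlip i n).dist_le_mul _ (icomp_mapsTo g hmap _ p hy) _ hy
      _ ≤ (c:ℝ)^n * C := by
          push_cast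
          exact mul_le_mul_of_nonneg_left (hC (icomp_mapsTo g hmap _ p hy) hy) (by positivity)
  have hto : Tendsto (fun n => 2 * ((c:ℝ)^n * C)) atTop (𝓝 0) := by
    have h := ((tendsto_pow_atTop_nhds_zero_of_lt_one hc0 hc1).mul_const C).const_mul 2
    simpa using h
  have hagree : ∀ (i j : ℕ → Fin N) (n : ℕ), (∀ m < n, i m = j m) →
      dist (ω i) (ω j) ≤ 2 * ((c:ℝ)^n * C) := by
    intro i j n h
    calc dist (ω i) (ω j)
        ≤ dist (ω i) (icomp g i n z) + dist (ω j) (icomp g i n z) := dist_triangle_right _ _ _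
      _ = dist (ω i) (icomp g i n z) + dist (ω j) (icomp g j n z) := by
          rw [icomp_congr g i j n h]
      _ ≤ (c:ℝ)^n * C + (c:ℝ)^n * C := add_le_add (hkey i n z hz) (hkey j n z hz)
      _ = 2 * ((c:ℝ)^n * C) := by ring
  have hcont : Continuous ω := by
    rw [continuous_iff_continuousAt]
    intro i
    rw [ContinuousAt, Metric.tendsto_nhds]
    intro ε hε
    obtain ⟨n, hn⟩ := (hto.eventually (gt_mem_nhds hε)).exists
    have hV : {j : ℕ → Fin N | ∀ m < n, j m = i m} ∈ 𝓝 i := by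
      have hmem : (Set.pi (↑(Finset.range n)) fun m => ({i m} : Set (Fin N))) ∈ 𝓝 i :=
        set_pi_mem_nhds (Finset.range n).finite_toSet
          (fun m _ => IsOpen.mem_nhds (isOpen_discrete _) rfl)
      refine Filter.mem_of_superset hmem fun j hj m hm => hj m (by simpa using hm)
    filter_upwards [hV] with j hj
    exact lt_of_le_of_lt (hagree j i n hj) hn
  have hcomp : IsCompact (Set.range ω) := by
    rw [← Set.image_univ]
    exact isCompact_univ.image hcont
  have hfix : ∀ (i : ℕ → Fin N) (k : ℕ), 1 ≤ k → Function.Periodic i k →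
      ω i ∈ A ∧ icomp g i k (ω i) = ω i ∧ ∀ x ∈ A, icomp g i k x = x → x = ω i := by
    intro i k hk hi
    have hmA := hωA i
    have hmaps : Set.MapsTo (icomp g i k) A A := icomp_mapsTo g hmap i k
    have hiterA : ∀ n, (icomp g i k)^[n] (ω i) ∈ A := fun n => hmaps.iterate n hmA
    have hseq : Tendsto (fun n => (icomp g i k)^[n] (ω i)) atTop (𝓝 (ω i)) := by
      have hmul : Tendsto (fun n => k * n) atTop atTop :=
        tendsto_atTop_mono (fun n => Nat.le_mul_of_pos_left n hk) tendsto_id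
      have h := (hω i (ω i) hmA).comp hmul
      simpa [Function.comp_def, icomp_iterate g i k hi] using h
    have hfixpt : icomp g i k (ω i) = ω i := by
      have h1 : Tendsto (fun n => (icomp g i k)^[n] (ω i)) atTop (𝓝[A] (ω i)) :=
        tendsto_nhdsWithin_of_tendsto_nhds_of_eventually_within _ hseq
          (Filter.Eventually.of_forall hiterA)
      have h2 : Tendsto (fun n => icomp g i k ((icomp g i k)^[n] (ω i))) atTop
          (𝓝 (icomp g i k (ω i))) :=
        ((icomp_lip g hmap hlip i k).continuousOn (ω i) hmA).tendsto.comp h1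
      have h3 : Tendsto (fun n => icomp g i k ((icomp g i k)^[n] (ω i))) atTop (𝓝 (ω i)) := by
        have h := hseq.comp (tendsto_add_atTop_nat 1)
        simpa [Function.comp_def, Function.iterate_succ_apply'] using h
      exact tendsto_nhds_unique h2 h3
    refine ⟨hmA, hfixpt, fun x hx hfx => ?_⟩
    have hd : dist x (ω i) ≤ (c:ℝ)^k * dist x (ω i) := by
      calc dist x (ω i) = dist (icomp g i k x) (icomp g i k (ω i)) := by rw [hfx, hfixpt]
        _ ≤ (c^k : ℝ≥0) * dist x (ω i) := (icomp_lip g hmap hlip i k).dist_le_mul _ hx _ hmA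
        _ = (c:ℝ)^k * dist x (ω i) := by push_cast; ring
    have hck : (c:ℝ)^k < 1 := pow_lt_one₀ hc0 hc1 (by omega)
    have hd0 : dist x (ω i) = 0 := by nlinarith [dist_nonneg (x := x) (y := ω i)]
    exact dist_eq_zero.1 hd0
  have hdense : Set.range ω ⊆ closure (ω '' {i | ∃ k, 1 ≤ k ∧ Function.Periodic i k}) := by
    rintro x ⟨i, rfl⟩
    rw [Metric.mem_closure_iff]
    intro ε hε
    obtain ⟨n, hn, hn1⟩ :=
      ((hto.eventually (gt_mem_nhds hε)).and (eventually_ge_atTop 1)).exists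
    set j : ℕ → Fin N := fun m => i (m % n) with hjdef
    have hper : Function.Periodic j n := fun m => by simp [hjdef, Nat.add_mod_right]
    refine ⟨ω j, Set.mem_image_of_mem ω ⟨n, hn1, hper⟩, ?_⟩
    refine lt_of_le_of_lt (hagree i j n fun m hm => ?_) hn
    simp [hjdef, Nat.mod_eq_of_lt hm]
  refine ⟨hcomp, hfix, hdense, ?_⟩
  intro F hF
  have hFk : ∀ (n : ℕ) (i : ℕ → Fin N), ∀ x ∈ A, F^[n] (icomp g i n x) = x := by
    intro n
    induction n with
    | zero => intro i x hx; rfl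
    | succ n ih =>
      intro i x hx
      rw [icomp_shift, Function.iterate_succ_apply,
        hF (i 0) _ (icomp_mapsTo g hmap _ n hx)]
      exact ih _ x hx
  have hFfix : ∀ (i : ℕ → Fin N) (k : ℕ), 1 ≤ k → Function.Periodic i k →
      F^[k] (ω i) = ω i := by
    intro i k hk hi
    obtain ⟨hmA, hfp, -⟩ := hfix i k hk hi
    conv_lhs => rw [← hfp]
    exact hFk k i (ω i) hmA
  refine ⟨hFfix, fun x hx => closure_mono ?_ (hdense hx)⟩
  rintro y ⟨i, ⟨k, hk, hper⟩, rfl⟩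
  exact ⟨Set.mem_range_self i, k, hk, hFfix i k hk hper⟩
end
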